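/- Let ν > 1. Then for every real t, the moment generating function of GED(ν) admits the everywhere-convergent power series representation ∫_ℝ e^{tx} f_ν(x) dx = ∑_{m=0}^∞ (t^{2m}/(2m)!) · (Γ(1/ν)/Γ(3/ν))^m · Γ((2m+1)/ν) / Γ(1/ν). -/

import Mathlib

/-!
The density is a constant multiple of `exp (-b |x|^ν)`, and for `ν > 1` Young's inequality gives
`B |x| ≤ (b/2) |x|^ν + C`, so `exp (B |x|)` times the density is integrable for every `B`.
Taking `B > |t|`, the `n`-th term `(t x)^n / n!` of the exponential series, times the density, is
bounded by `(|t|/B)^n exp (B |x|)` times the density, so the series may be integrated term by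
term. The odd moments vanish by symmetry, and the even ones are Gamma integrals after the
substitution `y = |x|^ν`.
-/

open MeasureTheory

/-- Scale parameter `λ = 2^{−1/ν} (Γ(1/ν)/Γ(3/ν))^{1/2}` of the generalized error
distribution `GED(ν)`. -/
noncomputable def gedScale (ν : ℝ) : ℝ :=
  (2 : ℝ) ^ (-(1 : ℝ) / ν) * Real.sqrt (Real.Gamma (1 / ν) / Real.Gamma (3 / ν))

/-- Density of the generalized error distribution `GED(ν)`:
`f_ν(x) = ν exp(−(1/2)|x/λ|^ν) / (λ 2^{1+1/ν} Γ(1/ν))`. -/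
noncomputable def gedDensity (ν x : ℝ) : ℝ :=
  ν * Real.exp (-(1 / 2) * |x / gedScale ν| ^ ν) /
    (gedScale ν * (2 : ℝ) ^ (1 + 1 / ν) * Real.Gamma (1 / ν))

open Real Set

lemma pow_abs_mul_div_factorial_le_mul_exp {t B : ℝ} (hB : 0 < B) (x : ℝ) (n : ℕ) :
    |t * x| ^ n / n.factorial ≤ (|t| / B) ^ n * exp (B * |x|) := by
  calc |t * x| ^ n / n.factorial = (|t| / B) ^ n * ((B * |x|) ^ n / n.factorial) := by
        rw [abs_mul, mul_pow, mul_pow, div_pow]; field_simp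
    _ ≤ (|t| / B) ^ n * exp (B * |x|) := by
        gcongr; exact pow_div_factorial_le_exp _ (by positivity) n

theorem hasSum_integral_exp_mul {f : ℝ → ℝ} {t B : ℝ} (htB : |t| < B)
    (hf : Integrable fun x => exp (B * |x|) * f x) :
    HasSum (fun n : ℕ => t ^ n / n.factorial * ∫ x, x ^ n * f x) (∫ x, exp (t * x) * f x) := by
  have hB : 0 < B := (abs_nonneg t).trans_lt htB
  set F : ℕ → ℝ → ℝ := fun n x => (t * x) ^ n / n.factorial * f x
  have hf_meas : AEStronglyMeasurable f := by
    have h := (Continuous.aestronglyMeasurable (μ := volume)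
      (by fun_prop : Continuous fun x : ℝ => exp (-(B * |x|)))).mul hf.1
    refine h.congr (Filter.Eventually.of_forall fun x => ?_)
    rw [Pi.mul_apply, ← mul_assoc, ← exp_add, neg_add_cancel, exp_zero, one_mul]
  have hF_le : ∀ n x, ‖F n x‖ ≤ (|t| / B) ^ n * ‖exp (B * |x|) * f x‖ := fun n x => by
    simp only [F, norm_mul, norm_div, norm_pow, Real.norm_eq_abs, Nat.abs_cast, abs_exp,
      ← abs_mul, ← mul_assoc]
    gcongr
    exact pow_abs_mul_div_factorial_le_mul_exp hB x n
  have hF_int : ∀ n, Integrable (F n) := fun n =>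
    (hf.norm.const_mul _).mono' ((by fun_prop : Continuous fun x => (t * x) ^ n / n.factorial)
      |>.aestronglyMeasurable.mul hf_meas) (Filter.Eventually.of_forall (hF_le n))
  have hF_sum : Summable fun n => ∫ x, ‖F n x‖ := by
    refine Summable.of_nonneg_of_le (fun n => integral_nonneg fun x => norm_nonneg _)
      (fun n => ?_) ((summable_geometric_of_lt_one (by positivity)
        ((div_lt_one hB).2 htB)).mul_right (∫ x, ‖exp (B * |x|) * f x‖))
    rw [← integral_const_mul]
    exact integral_mono (hF_int n).norm (hf.norm.const_mul _) (hF_le n)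
  have h_tsum : ∀ x, ∑' n, F n x = exp (t * x) * f x := fun x => by
    rw [tsum_mul_right, exp_eq_exp_ℝ, NormedSpace.exp_eq_tsum_div]
  have h_term : ∀ n, ∫ x, F n x = t ^ n / n.factorial * ∫ x, x ^ n * f x := fun n => by
    rw [← integral_const_mul]
    congr 1 with x
    simp only [F, mul_pow]; ring
  simpa only [h_term, h_tsum] using hasSum_integral_of_summable_integral_norm hF_int hF_sum

lemma integral_pow_mul_eq_zero_of_odd {f : ℝ → ℝ} (hf : ∀ x, f (-x) = f x) {n : ℕ}
    (hn : Odd n) : ∫ x, x ^ n * f x = 0 := by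
  have h := integral_neg_eq_self (fun x => x ^ n * f x) volume
  simp only [hn.neg_pow, hf, neg_mul, integral_neg] at h
  linarith

lemma hasSum_two_mul_iff_of_odd_eq_zero {M : Type*} [AddCommMonoid M] [TopologicalSpace M]
    {g : ℕ → M} (hg : ∀ n, Odd n → g n = 0) {a : M} :
    HasSum (fun m => g (2 * m)) a ↔ HasSum g a := by
  refine (Function.Injective.hasSum_iff (f := g) (fun a b h => by omega) fun n hn => ?_)
  obtain ⟨k, rfl⟩ | hodd := Nat.even_or_odd n
  · exact absurd ⟨k, by omega⟩ hn
  · exact hg n hodd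

section StretchedExponential

variable {p b : ℝ}

lemma integrable_of_integrableOn_Ioi_comp_abs {f : ℝ → ℝ}
    (hf : IntegrableOn (fun x => f |x|) (Ioi 0)) : Integrable fun x => f |x| := by
  have h_Iic : IntegrableOn (fun x => f |x|) (Iic 0) := by
    have h_neg : MeasurableEmbedding fun x : ℝ => -x := (Homeomorph.neg ℝ).measurableEmbedding
    rw [← Measure.map_neg_eq_self (volume : Measure ℝ), h_neg.integrableOn_map_iff]
    simp_rw [Function.comp_def, abs_neg, neg_preimage, neg_Iic, neg_zero]
    exact (integrableOn_Ici_iff_integrableOn_Ioi).mpr hf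
  rw [← integrableOn_univ, ← Iic_union_Ioi (a := (0 : ℝ))]
  exact h_Iic.union hf

lemma integrable_abs_pow_mul_exp_neg_mul_rpow (hp : 0 < p) (hb : 0 < b) (n : ℕ) :
    Integrable fun x : ℝ => |x| ^ n * exp (-b * |x| ^ p) := by
  simp_rw [← rpow_natCast (|_|)]
  refine integrable_of_integrableOn_Ioi_comp_abs (f := fun y => y ^ (n : ℝ) * exp (-b * y ^ p)) ?_
  refine (integrableOn_rpow_mul_exp_neg_mul_rpow (s := n)
    (by linarith [n.cast_nonneg (α := ℝ)]) hp hb).congr_fun (fun x hx => ?_) measurableSet_Ioi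
  rw [abs_of_pos hx]

lemma integral_abs_pow_mul_exp_neg_mul_rpow (hp : 0 < p) (hb : 0 < b) (n : ℕ) :
    ∫ x : ℝ, |x| ^ n * exp (-b * |x| ^ p)
      = 2 * (b ^ (-((n : ℝ) + 1) / p) * (1 / p) * Gamma (((n : ℝ) + 1) / p)) := by
  simp_rw [← rpow_natCast (|_|)]
  rw [integral_comp_abs (f := fun y => y ^ (n : ℝ) * exp (-b * y ^ p)),
    integral_rpow_mul_exp_neg_mul_rpow hp (by linarith [n.cast_nonneg (α := ℝ)]) hb]

-- Young's inequality `(y k) (|B| / k) ≤ (y k)^p / p + (|B| / k)^q / q`, with `k^p = b p`.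
lemma exists_mul_le_mul_rpow_add (hp : 1 < p) (hb : 0 < b) (B : ℝ) :
    ∃ C, ∀ y, 0 ≤ y → B * y ≤ b * y ^ p + C := by
  set q := p.conjExponent
  set k := (b * p) ^ p⁻¹
  have hk : 0 < k := by positivity
  refine ⟨(|B| / k) ^ q / q, fun y hy => ?_⟩
  have hyk : (y * k) ^ p / p = b * y ^ p := by
    rw [mul_rpow hy hk.le, rpow_inv_rpow (by positivity) (by positivity)]
    field_simp
  calc B * y ≤ |B| * y := mul_le_mul_of_nonneg_right (le_abs_self B) hy
    _ = y * k * (|B| / k) := by field_simp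
    _ ≤ (y * k) ^ p / p + (|B| / k) ^ q / q := young_inequality_of_nonneg
        (by positivity) (by positivity) (.conjExponent hp)
    _ = b * y ^ p + (|B| / k) ^ q / q := by rw [hyk]

lemma integrable_exp_mul_abs_mul_exp_neg_mul_rpow (hp : 1 < p) (hb : 0 < b) (B : ℝ) :
    Integrable fun x : ℝ => exp (B * |x|) * exp (-b * |x| ^ p) := by
  obtain ⟨C, hC⟩ := exists_mul_le_mul_rpow_add hp (half_pos hb) B
  have h_dom := (integrable_abs_pow_mul_exp_neg_mul_rpow (p := p) (by linarith)
    (half_pos hb) 0).const_mul (exp C)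
  refine h_dom.mono' (by fun_prop) (Filter.Eventually.of_forall fun x => ?_)
  have := hC |x| (abs_nonneg x)
  rw [norm_of_nonneg (by positivity), pow_zero, one_mul, ← exp_add, ← exp_add, exp_le_exp]
  linarith

end StretchedExponential

section GED

variable {ν : ℝ}

lemma gedDensity_neg (ν x : ℝ) : gedDensity ν (-x) = gedDensity ν x := by
  rw [gedDensity, gedDensity, neg_div, abs_neg]

/-- In terms of `s = √(Γ(1/ν)/Γ(3/ν))` one has `λ = 2^{-1/ν} s`, so `(1/2)|x/λ|^ν = |x/s|^ν`. -/
lemma gedDensity_eq (hν : 0 < ν) (x : ℝ) :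
    gedDensity ν x = ν / (2 * √(Gamma (1 / ν) / Gamma (3 / ν)) * Gamma (1 / ν)) *
      exp (-(√(Gamma (1 / ν) / Gamma (3 / ν)) ^ ν)⁻¹ * |x| ^ ν) := by
  set s := √(Gamma (1 / ν) / Gamma (3 / ν))
  have hs : 0 < s := sqrt_pos.2 (div_pos (Gamma_pos_of_pos (by positivity))
    (Gamma_pos_of_pos (by positivity)))
  have h_scale : gedScale ν = 2 ^ (-1 / ν) * s := rfl
  have h_scale_pos : 0 < gedScale ν := by rw [h_scale]; positivity
  have h_scale_rpow : gedScale ν ^ ν = s ^ ν / 2 := by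
    rw [h_scale, mul_rpow (by positivity) hs.le, ← rpow_mul zero_le_two,
      div_mul_cancel₀ _ hν.ne', rpow_neg_one]
    ring
  have h_norm : gedScale ν * 2 ^ (1 + 1 / ν) = 2 * s := by
    rw [h_scale, mul_comm _ s, mul_assoc, ← rpow_add zero_lt_two]
    norm_num [neg_div]
    ring
  rw [gedDensity, abs_div, abs_of_pos h_scale_pos, div_rpow (abs_nonneg x) h_scale_pos.le,
    h_scale_rpow, h_norm]
  have : 0 < s ^ ν := by positivity
  field_simp

lemma integrable_exp_mul_abs_mul_gedDensity (hν : 1 < ν) (B : ℝ) :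
    Integrable fun x => exp (B * |x|) * gedDensity ν x := by
  have hs : 0 < √(Gamma (1 / ν) / Gamma (3 / ν)) ^ ν := rpow_pos_of_pos (sqrt_pos.2 (div_pos
    (Gamma_pos_of_pos (by positivity)) (Gamma_pos_of_pos (by positivity)))) _
  simp_rw [gedDensity_eq (zero_lt_one.trans hν), mul_left_comm (exp _)]
  exact (integrable_exp_mul_abs_mul_exp_neg_mul_rpow hν (inv_pos.2 hs) B).const_mul _

lemma integral_two_mul_pow_mul_gedDensity (hν : 0 < ν) (m : ℕ) :
    ∫ x, x ^ (2 * m) * gedDensity ν x =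
      (Gamma (1 / ν) / Gamma (3 / ν)) ^ m * (Gamma ((2 * (m : ℝ) + 1) / ν) / Gamma (1 / ν)) := by
  have hG1 : 0 < Gamma (1 / ν) := Gamma_pos_of_pos (by positivity)
  have hG3 : 0 < Gamma (3 / ν) := Gamma_pos_of_pos (by positivity)
  set s := √(Gamma (1 / ν) / Gamma (3 / ν))
  have hs : 0 < s := sqrt_pos.2 (div_pos hG1 hG3)
  have h_inv_rpow : ((s ^ ν)⁻¹) ^ (-(((2 * m : ℕ) : ℝ) + 1) / ν) = s * (s ^ 2) ^ m := by
    rw [← rpow_neg hs.le, ← rpow_mul hs.le,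
      show -ν * (-(((2 * m : ℕ) : ℝ) + 1) / ν) = ((2 * m + 1 : ℕ) : ℝ) by push_cast; field_simp,
      rpow_natCast, pow_succ, pow_mul]
    ring
  have h_integrand : ∀ x, x ^ (2 * m) * gedDensity ν x = ν / (2 * s * Gamma (1 / ν)) *
      (|x| ^ (2 * m) * exp (-(s ^ ν)⁻¹ * |x| ^ ν)) := fun x => by
    rw [gedDensity_eq hν, (even_two_mul m).pow_abs]; ring
  simp_rw [h_integrand]
  rw [integral_const_mul, integral_abs_pow_mul_exp_neg_mul_rpow hν
    (inv_pos.2 (rpow_pos_of_pos hs ν)), h_inv_rpow, sq_sqrt (div_pos hG1 hG3).le]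
  push_cast
  field_simp

end GED

/-- For `ν > 1`, the moment generating function of `GED(ν)` has the everywhere-convergent
power series `M(t) = ∑_{m≥0} (t^{2m}/(2m)!) (Γ(1/ν)/Γ(3/ν))^m Γ((2m+1)/ν)/Γ(1/ν)`. -/
theorem ged_mgf_power_series (ν : ℝ) (hν : 1 < ν) :
    ∀ t : ℝ,
      HasSum
        (fun m : ℕ =>
          t ^ (2 * m) / (Nat.factorial (2 * m) : ℝ) *
            ((Real.Gamma (1 / ν) / Real.Gamma (3 / ν)) ^ m *
              (Real.Gamma ((2 * (m : ℝ) + 1) / ν) / Real.Gamma (1 / ν))))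
        (∫ x, Real.exp (t * x) * gedDensity ν x) := by
  intro t
  have h_series := hasSum_integral_exp_mul (lt_add_one |t|)
    (integrable_exp_mul_abs_mul_gedDensity hν (|t| + 1))
  have h_odd : ∀ n, Odd n → t ^ n / n.factorial * ∫ x, x ^ n * gedDensity ν x = 0 :=
    fun n hn => by rw [integral_pow_mul_eq_zero_of_odd (gedDensity_neg ν) hn, mul_zero]
  rw [← hasSum_two_mul_iff_of_odd_eq_zero h_odd] at h_series
  simpa only [integral_two_mul_pow_mul_gedDensity (zero_lt_one.trans hν)] using h_series
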